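/- arXiv:2010.15078 — 3 statements merged into one kernel-verified Lean document; each statement's English description precedes it below -/
import Mathlib

section
/- For every θ > 0 and every x ≥ 0, the mean residual life function of the i-Garima distribution satisfies m(x) = (1/(1−G(x;θ))) · ∫ₓ^∞ (1−G(t;θ)) dt = (4+θ+θx)/(θ(3+θ+θx)), where G(x;θ) = 1 − (1 + θx/(θ+3))·e^{-θx}. -/
/-!
The survival function of the i-Garima distribution is `(1 + θ t / (θ + 3)) e^{-θ t}`, an affine
function times a decaying exponential. Such a function has the explicit primitive
`-(a + b t + b / θ) e^{-θ t} / θ`, which vanishes at infinity, so the integral of the survival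
function over `(x, ∞)` is `(a + b x + b / θ) e^{-θ x} / θ`; dividing by the survival function at `x`
leaves a rational function of `θ` and `x`.
-/

open MeasureTheory Filter Real Set Topology

section AffineMulExp

variable {θ : ℝ} (a b : ℝ)

theorem tendsto_affine_mul_exp_neg_mul_atTop (hθ : 0 < θ) :
    Tendsto (fun t => (a + b * t) * exp (-θ * t)) atTop (𝓝 0) := by
  have h_exp : Tendsto (fun t => exp (-θ * t)) atTop (𝓝 0) :=
    tendsto_exp_atBot.comp (tendsto_id.const_mul_atTop_of_neg (neg_neg_iff_pos.2 hθ))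
  have h_id_mul_exp : Tendsto (fun t => t * exp (-θ * t)) atTop (𝓝 0) := by
    have := ((tendsto_pow_mul_exp_neg_atTop_nhds_zero 1).comp
      (tendsto_id.const_mul_atTop hθ)).const_mul θ⁻¹
    rw [mul_zero] at this
    refine this.congr fun t => ?_
    simp only [Function.comp_apply, id_eq, pow_one, neg_mul]
    field_simp
  simpa [add_mul, mul_assoc] using (h_exp.const_mul a).add (h_id_mul_exp.const_mul b)

theorem hasDerivAt_affine_mul_exp_neg_mul (hθ : θ ≠ 0) (t : ℝ) :
    HasDerivAt (fun t => -(a + b * t + b / θ) * exp (-θ * t) / θ)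
      ((a + b * t) * exp (-θ * t)) t := by
  have h_affine : HasDerivAt (fun t => -(a + b * t + b / θ)) (-b) t := by
    simpa using ((((hasDerivAt_id t).const_mul b).const_add a).add_const (b / θ)).fun_neg
  have h_exp : HasDerivAt (fun t => exp (-θ * t)) (exp (-θ * t) * -θ) t := by
    simpa using ((hasDerivAt_id t).const_mul (-θ)).exp
  refine ((h_affine.mul h_exp).div_const θ).congr_deriv ?_
  field_simp
  ring

theorem integrableOn_affine_mul_exp_neg_mul_Ioi (hθ : 0 < θ) (x : ℝ) :
    IntegrableOn (fun t => (a + b * t) * exp (-θ * t)) (Ioi x) := by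
  refine integrable_of_isBigO_exp_neg (half_pos hθ) (by fun_prop) ?_
  -- `(a + b t) e^{-θ t} = ((a + b t) e^{-θ t / 2}) e^{-θ t / 2}` and the first factor tends to `0`.
  have h_bdd := (tendsto_affine_mul_exp_neg_mul_atTop a b (half_pos hθ)).isBigO_one ℝ
  refine ((h_bdd.mul (Asymptotics.isBigO_refl (fun t => exp (-(θ / 2) * t)) _)).congr_left
    fun t => ?_).congr_right fun t => one_mul _
  rw [mul_assoc, ← exp_add]
  ring_nf

theorem integral_affine_mul_exp_neg_mul_Ioi (hθ : 0 < θ) (x : ℝ) :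
    ∫ t in Ioi x, (a + b * t) * exp (-θ * t) = (a + b * x + b / θ) * exp (-θ * x) / θ := by
  have h_primitive_tendsto :
      Tendsto (fun t => -(a + b * t + b / θ) * exp (-θ * t) / θ) atTop (𝓝 0) := by
    have := ((tendsto_affine_mul_exp_neg_mul_atTop (a + b / θ) b hθ).neg.div_const θ)
    rw [neg_zero, zero_div] at this
    exact this.congr fun t => by ring
  rw [integral_Ioi_of_hasDerivAt_of_tendsto'
    (fun t _ => hasDerivAt_affine_mul_exp_neg_mul a b hθ.ne' t)
    (integrableOn_affine_mul_exp_neg_mul_Ioi a b hθ x) h_primitive_tendsto]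
  ring

end AffineMulExp

/-- The mean residual life function of the i-Garima distribution:
(1/(1−G(x;θ)))·∫ₓ^∞ (1−G(t;θ)) dt = (4+θ+θx)/(θ(3+θ+θx)). -/
theorem iGarima_mrlf (θ : ℝ) (hθ : 0 < θ) (x : ℝ) (hx : 0 ≤ x) :
    (1 / (1 - (1 - (1 + θ * x / (θ + 3)) * Real.exp (-θ * x))))
        * ∫ t in Set.Ioi x, (1 - (1 - (1 + θ * t / (θ + 3)) * Real.exp (-θ * t)))
      = (4 + θ + θ * x) / (θ * (3 + θ + θ * x)) := by
  have h_integral := integral_affine_mul_exp_neg_mul_Ioi 1 (θ / (θ + 3)) hθ x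
  simp only [sub_sub_cancel, mul_div_right_comm θ _ (θ + 3)]
  rw [h_integral]
  have h_denom_pos : 0 < 3 + θ + θ * x := by positivity
  field_simp
  ring
end

section
/- For every θ > 0 and every q ≥ 0, the tail first-moment integral of the i-Garima distribution satisfies ∫_q^∞ x · (θ/(θ+3))·(2+θ+θx)·e^{-θx} dx = (θ²q² + (θ²+4θ)q + (θ+4))·e^{-θq} / (θ(θ+3)); equivalently, the Lorenz curve value is L(p) = 1 − (θ²q² + (θ²+4θ)q + (θ+4))·e^{-θq}/(θ+4) with q = G^{-1}(p) and mean μ = (θ+4)/(θ(θ+3)). -/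
/-!
The function `-T θ x`, where `T θ q = (θ²q² + (θ²+4θ)q + (θ+4)) e^{-θq} / (θ(θ+3))`, is an
antiderivative of `x · g(x; θ)`. Since `T θ q → 0` as `q → ∞` and the integrand is nonnegative
on `[0, ∞)`, the fundamental theorem of calculus gives `∫_q^∞ x g = T θ q`, and `∫_0^q x g =
T θ 0 - T θ q` with `T θ 0 = μ`, which is the Lorenz curve after dividing by `μ`.
-/

open MeasureTheory Filter Real Set Topology

noncomputable section

namespace IGarima

def pdf (θ x : ℝ) : ℝ := θ / (θ + 3) * (2 + θ + θ * x) * exp (-θ * x)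

def mean (θ : ℝ) : ℝ := (θ + 4) / (θ * (θ + 3))

def tailMoment (θ q : ℝ) : ℝ :=
  (θ ^ 2 * q ^ 2 + (θ ^ 2 + 4 * θ) * q + (θ + 4)) * exp (-θ * q) / (θ * (θ + 3))

theorem tailMoment_zero (θ : ℝ) : tailMoment θ 0 = mean θ := by
  simp [tailMoment, mean]

theorem mul_pdf_nonneg {θ x : ℝ} (hθ : 0 < θ) (hx : 0 ≤ x) : 0 ≤ x * pdf θ x := by
  unfold pdf
  positivity

theorem hasDerivAt_neg_tailMoment {θ : ℝ} (hθ : θ ≠ 0) (hθ3 : θ + 3 ≠ 0) (x : ℝ) :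
    HasDerivAt (fun y => -tailMoment θ y) (x * pdf θ x) x := by
  have hpoly : HasDerivAt (fun y : ℝ => θ ^ 2 * y ^ 2 + (θ ^ 2 + 4 * θ) * y + (θ + 4))
      (θ ^ 2 * (2 * x) + (θ ^ 2 + 4 * θ)) x := by
    simpa using (((hasDerivAt_pow 2 x).const_mul (θ ^ 2)).add
      ((hasDerivAt_id x).const_mul (θ ^ 2 + 4 * θ))).add_const (θ + 4)
  have hexp : HasDerivAt (fun y : ℝ => exp (-θ * y)) (exp (-θ * x) * -θ) x := by
    simpa using ((hasDerivAt_id x).const_mul (-θ)).exp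
  refine ((hpoly.mul hexp).div_const (θ * (θ + 3))).neg.congr_deriv ?_
  unfold pdf
  field_simp
  ring

theorem tendsto_pow_mul_exp_neg_mul_atTop (n : ℕ) {b : ℝ} (hb : 0 < b) :
    Tendsto (fun x : ℝ => x ^ n * exp (-b * x)) atTop (𝓝 0) := by
  simpa using tendsto_rpow_mul_exp_neg_mul_atTop_nhds_zero n b hb

theorem tendsto_tailMoment_atTop {θ : ℝ} (hθ : 0 < θ) :
    Tendsto (tailMoment θ) atTop (𝓝 0) := by
  have h := ((((tendsto_pow_mul_exp_neg_mul_atTop 2 hθ).const_mul (θ ^ 2)).add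
    ((tendsto_pow_mul_exp_neg_mul_atTop 1 hθ).const_mul (θ ^ 2 + 4 * θ))).add
    ((tendsto_pow_mul_exp_neg_mul_atTop 0 hθ).const_mul (θ + 4))).div_const (θ * (θ + 3))
  simp only [mul_zero, add_zero, zero_div] at h
  refine h.congr fun x => ?_
  simp only [tailMoment, pow_one, pow_zero, one_mul]
  ring

theorem integral_Ioi_mul_pdf {θ q : ℝ} (hθ : 0 < θ) (hq : 0 ≤ q) :
    ∫ x in Ioi q, x * pdf θ x = tailMoment θ q := by
  rw [integral_Ioi_of_hasDerivAt_of_nonneg'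
    (fun x _ => hasDerivAt_neg_tailMoment hθ.ne' (by linarith) x)
    (fun x hx => mul_pdf_nonneg hθ (hq.trans (le_of_lt hx)))
    (tendsto_tailMoment_atTop hθ).neg]
  ring

theorem intervalIntegral_mul_pdf {θ : ℝ} (hθ : θ ≠ 0) (hθ3 : θ + 3 ≠ 0) (a b : ℝ) :
    ∫ x in a..b, x * pdf θ x = tailMoment θ a - tailMoment θ b := by
  rw [intervalIntegral.integral_eq_sub_of_hasDerivAt
    (fun x _ => hasDerivAt_neg_tailMoment hθ hθ3 x)]
  · ring
  · exact (continuous_id.mul (by unfold pdf; fun_prop)).intervalIntegrable a b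

theorem lorenz_eq {θ : ℝ} (hθ : 0 < θ) (q : ℝ) :
    1 / mean θ * ∫ x in (0 : ℝ)..q, x * pdf θ x = 1 - tailMoment θ q / mean θ := by
  have hmean : mean θ ≠ 0 := by unfold mean; positivity
  rw [intervalIntegral_mul_pdf hθ.ne' (by linarith), tailMoment_zero]
  field_simp

end IGarima

end

open IGarima in
/-- Tail first-moment integral of the i-Garima distribution:
∫_q^∞ x·g(x;θ) dx = (θ²q² + (θ²+4θ)q + (θ+4))·e^{-θq}/(θ(θ+3)) for q ≥ 0;
equivalently the Lorenz curve value is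
L = (1/μ)·∫₀^q x·g(x;θ) dx = 1 − (θ²q² + (θ²+4θ)q + (θ+4))·e^{-θq}/(θ+4)
with μ = (θ+4)/(θ(θ+3)). -/
theorem iGarima_tail_moment_and_lorenz (θ : ℝ) (hθ : 0 < θ) (q : ℝ) (hq : 0 ≤ q) :
    (∫ x in Set.Ioi q, x * ((θ / (θ + 3)) * (2 + θ + θ * x) * Real.exp (-θ * x))
        = (θ ^ 2 * q ^ 2 + (θ ^ 2 + 4 * θ) * q + (θ + 4)) * Real.exp (-θ * q)
            / (θ * (θ + 3)))
      ∧ (1 / ((θ + 4) / (θ * (θ + 3))))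
            * ∫ x in (0 : ℝ)..q, x * ((θ / (θ + 3)) * (2 + θ + θ * x) * Real.exp (-θ * x))
          = 1 - (θ ^ 2 * q ^ 2 + (θ ^ 2 + 4 * θ) * q + (θ + 4)) * Real.exp (-θ * q)
                / (θ + 4) := by
  refine ⟨integral_Ioi_mul_pdf hθ hq, ?_⟩
  have hlorenz := lorenz_eq hθ q
  have hratio : tailMoment θ q / mean θ
      = (θ ^ 2 * q ^ 2 + (θ ^ 2 + 4 * θ) * q + (θ + 4)) * exp (-θ * q) / (θ + 4) := by
    unfold tailMoment mean
    field_simp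
  rwa [hratio] at hlorenz
end

section
/- Let θ₁ > 0 and θ₂ > 0, and let g(x;θ₁) = (θ₁/(θ₁+3))·(2+θ₁+θ₁x)·e^{-θ₁x} and G(x;θ₂) = 1 − (1 + θ₂x/(θ₂+3))·e^{-θ₂x}. Then the stress-strength reliability R = ∫₀^∞ g(x;θ₁)·G(x;θ₂) dx equals 1 − θ₁·[(θ₁θ₂+3θ₁+2θ₂+6)(θ₁+θ₂)² + (2θ₁θ₂+3θ₁+2θ₂)(θ₁+θ₂) + 2θ₁θ₂] / ((θ₁+3)(θ₂+3)(θ₁+θ₂)³). -/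
/-!
Since `G = 1 - S` with `S` the survival function, `g(x;θ₁)·G(x;θ₂)` is a polynomial of degree
at most two times `e^{-θ₁x}` minus another such polynomial times `e^{-(θ₁+θ₂)x}`; both integrate
termwise by the Gamma moments `∫₀^∞ xⁿ e^{-sx} dx = n!/s^{n+1}`.
-/

open Real Set MeasureTheory
open scoped Nat

section ExpMoments

variable {s : ℝ}

lemma integrableOn_pow_mul_exp_neg_mul (n : ℕ) (hs : 0 < s) :
    IntegrableOn (fun x : ℝ => x ^ n * exp (-(s * x))) (Ioi 0) := by
  refine (integrableOn_rpow_mul_exp_neg_mul_rpow (s := n) (p := 1)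
    (neg_one_lt_zero.trans_le n.cast_nonneg) one_pos hs).congr_fun (fun x _ => ?_) measurableSet_Ioi
  simp [Real.rpow_natCast]

lemma integral_pow_mul_exp_neg_mul (n : ℕ) (hs : 0 < s) :
    ∫ x in Ioi (0 : ℝ), x ^ n * exp (-(s * x)) = n ! / s ^ (n + 1) := by
  have h := integral_rpow_mul_exp_neg_mul_Ioi (a := n + 1) (by positivity) hs
  rw [add_sub_cancel_right, Real.Gamma_nat_eq_factorial, ← Nat.cast_succ, Real.rpow_natCast] at h
  convert h using 1
  · simp_rw [Real.rpow_natCast]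
  · rw [one_div_pow, Nat.succ_eq_add_one]
    ring

variable (a b c : ℝ)

lemma quadratic_mul_exp_eq_sum_pow_mul_exp (x : ℝ) : (a + b * x + c * x ^ 2) * exp (-(s * x))
    = a * (x ^ 0 * exp (-(s * x))) + b * (x ^ 1 * exp (-(s * x)))
      + c * (x ^ 2 * exp (-(s * x))) := by
  ring

lemma integrableOn_quadratic_mul_exp_neg_mul (hs : 0 < s) :
    IntegrableOn (fun x : ℝ => (a + b * x + c * x ^ 2) * exp (-(s * x))) (Ioi 0) := by
  simp_rw [quadratic_mul_exp_eq_sum_pow_mul_exp]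
  exact (((integrableOn_pow_mul_exp_neg_mul 0 hs).const_mul a).add
    ((integrableOn_pow_mul_exp_neg_mul 1 hs).const_mul b)).add
    ((integrableOn_pow_mul_exp_neg_mul 2 hs).const_mul c)

lemma integral_quadratic_mul_exp_neg_mul (hs : 0 < s) :
    ∫ x in Ioi (0 : ℝ), (a + b * x + c * x ^ 2) * exp (-(s * x))
      = a / s + b / s ^ 2 + 2 * c / s ^ 3 := by
  have h0 := (integrableOn_pow_mul_exp_neg_mul 0 hs).const_mul a
  have h1 := (integrableOn_pow_mul_exp_neg_mul 1 hs).const_mul b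
  have h2 := (integrableOn_pow_mul_exp_neg_mul 2 hs).const_mul c
  simp_rw [quadratic_mul_exp_eq_sum_pow_mul_exp]
  rw [integral_add _ h2, integral_add h0 h1, integral_const_mul, integral_const_mul,
    integral_const_mul, integral_pow_mul_exp_neg_mul 0 hs, integral_pow_mul_exp_neg_mul 1 hs,
    integral_pow_mul_exp_neg_mul 2 hs]
  · simp only [Nat.factorial]
    ring
  · exact h0.add h1

end ExpMoments

noncomputable def iGarimaPDF (θ x : ℝ) : ℝ := θ / (θ + 3) * (2 + θ + θ * x) * exp (-θ * x)

noncomputable def iGarimaCDF (θ x : ℝ) : ℝ := 1 - (1 + θ * x / (θ + 3)) * exp (-θ * x)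

lemma iGarimaPDF_mul_iGarimaCDF (θ₁ θ₂ x : ℝ) :
    iGarimaPDF θ₁ x * iGarimaCDF θ₂ x
      = (θ₁ / (θ₁ + 3) * (2 + θ₁) + θ₁ / (θ₁ + 3) * θ₁ * x + 0 * x ^ 2) * exp (-(θ₁ * x))
        - (θ₁ / (θ₁ + 3) * (2 + θ₁)
            + θ₁ / (θ₁ + 3) * (θ₁ + (2 + θ₁) * (θ₂ / (θ₂ + 3))) * x
            + θ₁ / (θ₁ + 3) * θ₁ * (θ₂ / (θ₂ + 3)) * x ^ 2) * exp (-((θ₁ + θ₂) * x)) := by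
  rw [iGarimaPDF, iGarimaCDF, add_mul θ₁ θ₂, neg_add, exp_add, neg_mul, neg_mul]
  ring

/-- Stress-strength reliability of two independent i-Garima variables:
R = ∫₀^∞ g(x;θ₁)·G(x;θ₂) dx
  = 1 − θ₁[(θ₁θ₂+3θ₁+2θ₂+6)(θ₁+θ₂)² + (2θ₁θ₂+3θ₁+2θ₂)(θ₁+θ₂) + 2θ₁θ₂]
        / ((θ₁+3)(θ₂+3)(θ₁+θ₂)³). -/
theorem iGarima_stress_strength (θ₁ θ₂ : ℝ) (hθ₁ : 0 < θ₁) (hθ₂ : 0 < θ₂) :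
    ∫ x in Set.Ioi (0 : ℝ),
        ((θ₁ / (θ₁ + 3)) * (2 + θ₁ + θ₁ * x) * Real.exp (-θ₁ * x))
          * (1 - (1 + θ₂ * x / (θ₂ + 3)) * Real.exp (-θ₂ * x))
      = 1 - θ₁ * ((θ₁ * θ₂ + 3 * θ₁ + 2 * θ₂ + 6) * (θ₁ + θ₂) ^ 2
              + (2 * θ₁ * θ₂ + 3 * θ₁ + 2 * θ₂) * (θ₁ + θ₂)
              + 2 * θ₁ * θ₂)
            / ((θ₁ + 3) * (θ₂ + 3) * (θ₁ + θ₂) ^ 3) := by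
  have hsum : 0 < θ₁ + θ₂ := add_pos hθ₁ hθ₂
  change ∫ x in Ioi 0, iGarimaPDF θ₁ x * iGarimaCDF θ₂ x = _
  simp_rw [iGarimaPDF_mul_iGarimaCDF]
  rw [integral_sub (integrableOn_quadratic_mul_exp_neg_mul _ _ _ hθ₁)
      (integrableOn_quadratic_mul_exp_neg_mul _ _ _ hsum),
    integral_quadratic_mul_exp_neg_mul _ _ _ hθ₁, integral_quadratic_mul_exp_neg_mul _ _ _ hsum]
  field_simp
  ring
end
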